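/- arXiv:2311.18693 — 5 statements merged into one kernel-verified Lean document; each statement's English description precedes it below -/
import Mathlib

section
/- Let E be a complete real inner product space, let F : E → ℝ be differentiable with everywhere-differentiable gradient, and suppose there is a constant c ≥ 0 such that ‖∇F(x)‖ = c for all x ∈ E. If φ : ℝ → E is differentiable and satisfies the gradient flow equation φ'(t) = ∇F(φ(t)) for all t ∈ ℝ, then φ is a straight line traversed at constant velocity: φ(t) = φ(0) + t • ∇F(φ(0)) for all t ∈ ℝ (i.e., the gradient flow is a geodesic of the Euclidean metric). -/
open InnerProductSpace

/-- If the gradient of `F` has constant length `c`, then any solution `φ` of the gradient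
flow equation `φ' t = ∇F (φ t)` is a straight line traversed at constant velocity,
i.e. a geodesic of the Euclidean metric. -/
theorem gradient_flow_is_geodesic
    {E : Type*} [NormedAddCommGroup E] [InnerProductSpace ℝ E] [CompleteSpace E]
    (F : E → ℝ) (hF : Differentiable ℝ F)
    (hgrad : Differentiable ℝ (gradient F))
    (c : ℝ) (hc : 0 ≤ c) (hlen : ∀ x : E, ‖gradient F x‖ = c)
    (φ : ℝ → E) (hφ : ∀ t : ℝ, HasDerivAt φ (gradient F (φ t)) t) :
    ∀ t : ℝ, φ t = φ 0 + t • gradient F (φ 0) := by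
  set G := gradient F with hG
  set A := fun x => fderiv ℝ G x with hA
  have hAx : ∀ x, HasFDerivAt G (A x) x := fun x => (hgrad x).hasFDerivAt
  -- derivative of the constant norm gives orthogonality
  have horth : ∀ x v, ⟪(A x) v, G x⟫_ℝ = 0 := by
    intro x v
    have hN : ∀ y : E, ⟪G y, G y⟫_ℝ = c ^ 2 := by
      intro y
      rw [real_inner_self_eq_norm_sq, hlen]
    have h1 : HasFDerivAt (fun y => ⟪G y, G y⟫_ℝ)
        ((fderivInnerCLM ℝ (G x, G x)).comp <| (A x).prod (A x)) x :=
      (hAx x).inner ℝ (hAx x)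
    have h2 : HasFDerivAt (fun y => ⟪G y, G y⟫_ℝ) (0 : E →L[ℝ] ℝ) x := by
      have := hasFDerivAt_const (c ^ 2) x (𝕜 := ℝ) (E := E)
      exact this.congr_of_eventuallyEq (Filter.Eventually.of_forall hN)
    have := h1.unique h2
    have h3 := congrFun (congrArg DFunLike.coe this) v
    simp only [ContinuousLinearMap.comp_apply, ContinuousLinearMap.prod_apply,
      fderivInnerCLM_apply, ContinuousLinearMap.zero_apply] at h3
    have h4 : ⟪G x, (A x) v⟫_ℝ = ⟪(A x) v, G x⟫_ℝ := real_inner_comm _ _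
    linarith [h3, h4.symm ▸ h3]
  -- symmetry of the second derivative
  have hsymm : ∀ x v w, ⟪(A x) v, w⟫_ℝ = ⟪(A x) w, v⟫_ℝ := by
    intro x v w
    set L : E →L[ℝ] (E →L[ℝ] ℝ) :=
      (isBoundedBilinearMap_inner (𝕜 := ℝ) (E := E)).toContinuousLinearMap with hL
    have hLapp : ∀ a b : E, L a b = ⟪a, b⟫_ℝ := fun a b => rfl
    have hf' : ∀ y, HasFDerivAt F (L (G y)) y := by
      intro y
      have h := (hF y).hasGradientAt.hasFDerivAt
      have : L (G y) = toDual ℝ E (G y) := by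
        ext w; simp [hLapp, toDual_apply_apply]
      rw [this]; exact h
    have hf'' : HasFDerivAt (fun y => L (G y)) (L.comp (A x)) x :=
      L.hasFDerivAt.comp x (hAx x)
    have := second_derivative_symmetric hf' hf'' v w
    simpa [ContinuousLinearMap.comp_apply, hLapp] using this
  -- the gradient kills itself
  have hker : ∀ x, (A x) (G x) = 0 := by
    intro x
    have h := hsymm x (G x) ((A x) (G x))
    rw [horth x ((A x) (G x))] at h
    have : ⟪(A x) (G x), (A x) (G x)⟫_ℝ = 0 := by
      rw [h]
    exact inner_self_eq_zero.mp this
  -- G ∘ φ is constant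
  have hgconst : ∀ t : ℝ, G (φ t) = G (φ 0) := by
    have hd : ∀ t : ℝ, HasDerivAt (fun s => G (φ s)) 0 t := by
      intro t
      have := (hAx (φ t)).comp_hasDerivAt t (hφ t)
      exact (by simpa [hker (φ t)] using this : HasDerivAt (G ∘ φ) 0 t)
    intro t
    exact is_const_of_deriv_eq_zero (fun s => (hd s).differentiableAt)
      (fun s => (hd s).deriv) t 0
  -- hence φ is affine
  intro t
  have hd : ∀ s : ℝ, HasDerivAt (fun u => φ u - u • G (φ 0)) 0 s := by
    intro s
    have h1 : HasDerivAt (fun u : ℝ => u • G (φ 0)) (G (φ 0)) s := by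
      simpa using (hasDerivAt_id s).smul_const (G (φ 0))
    have := (hφ s).sub h1
    exact (by simpa [hgconst s] using this : HasDerivAt (φ - fun u => u • G (φ 0)) 0 s)
  have := is_const_of_deriv_eq_zero (fun s => (hd s).differentiableAt)
    (fun s => (hd s).deriv) t 0
  simp only [zero_smul, sub_zero] at this
  exact sub_eq_iff_eq_add.mp this
end

section
/- Let E be a complete real inner product space, let F : E → ℝ be differentiable with everywhere-differentiable gradient, and suppose ‖∇F(x)‖ = c for all x ∈ E. If φ : ℝ → E satisfies φ'(t) = ∇F(φ(t)) for all t, then dist(φ(s), φ(t)) = c·|s − t| for all s, t ∈ ℝ; in particular, when c = 1 the curve φ is a unit-speed geodesic (an isometric embedding of ℝ into E) and the affine parameter t measures the distance travelled along the flow. -/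
/-- If the gradient of `F` has constant length `c` and `φ` solves the gradient flow
equation `φ' t = ∇F (φ t)`, then `dist (φ s) (φ t) = c * |s - t|`; in particular, when
`c = 1` the curve `φ` is a unit-speed geodesic (an isometric embedding of `ℝ` into `E`). -/
theorem gradient_flow_dist
    {E : Type*} [NormedAddCommGroup E] [InnerProductSpace ℝ E] [CompleteSpace E]
    (F : E → ℝ) (hF : Differentiable ℝ F)
    (hgrad : Differentiable ℝ (gradient F))
    (c : ℝ) (hlen : ∀ x : E, ‖gradient F x‖ = c)
    (φ : ℝ → E) (hφ : ∀ t : ℝ, HasDerivAt φ (gradient F (φ t)) t) :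
    (∀ s t : ℝ, dist (φ s) (φ t) = c * |s - t|) ∧
    (c = 1 → ∀ s t : ℝ, dist (φ s) (φ t) = |s - t|) := by
  have hc0 : 0 ≤ c := (hlen 0) ▸ norm_nonneg _
  -- φ is c-Lipschitz
  have hφlip : ∀ s t : ℝ, ‖φ t - φ s‖ ≤ c * ‖t - s‖ := by
    intro s t
    refine Convex.norm_image_sub_le_of_norm_hasDerivWithin_le
      (fun x _ => (hφ x).hasDerivWithinAt) (fun x _ => (hlen (φ x)).le)
      convex_univ (Set.mem_univ s) (Set.mem_univ t)
  -- the Fréchet derivative of F has norm c everywhere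
  have hfnorm : ∀ x : E, ‖fderiv ℝ F x‖ = c := by
    intro x
    have : ‖gradient F x‖ = ‖fderiv ℝ F x‖ :=
      (InnerProductSpace.toDual ℝ E).symm.norm_map (fderiv ℝ F x)
    rw [← this, hlen]
  -- F is c-Lipschitz
  have hFlip : ∀ x y : E, ‖F y - F x‖ ≤ c * ‖y - x‖ := by
    intro x y
    exact Convex.norm_image_sub_le_of_norm_fderiv_le
      (fun z _ => hF z) (fun z _ => (hfnorm z).le)
      convex_univ (Set.mem_univ x) (Set.mem_univ y)
  -- F ∘ φ grows at rate c^2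
  have hcomp : ∀ t : ℝ, HasDerivAt (fun t => F (φ t)) (c ^ 2) t := by
    intro t
    have h1 : HasDerivAt (fun t => F (φ t))
        (fderiv ℝ F (φ t) (gradient F (φ t))) t :=
      (hF (φ t)).hasFDerivAt.comp_hasDerivAt t (hφ t)
    have h2 : fderiv ℝ F (φ t) (gradient F (φ t)) = c ^ 2 := by
      have : fderiv ℝ F (φ t) = InnerProductSpace.toDual ℝ E (gradient F (φ t)) := by
        rw [gradient, (InnerProductSpace.toDual ℝ E).apply_symm_apply]
      rw [this, InnerProductSpace.toDual_apply_apply, real_inner_self_eq_norm_sq, hlen]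
    rwa [h2] at h1
  have key : ∀ s t : ℝ, F (φ t) - F (φ s) = c ^ 2 * (t - s) := by
    intro s t
    have hg : ∀ u : ℝ, HasDerivAt (fun u => F (φ u) - c ^ 2 * u) 0 u := by
      intro u
      have := (hcomp u).sub ((hasDerivAt_id u).const_mul (c ^ 2))
      simpa [Pi.sub_def] using this
    have hconst : (fun u => F (φ u) - c ^ 2 * u) t = (fun u => F (φ u) - c ^ 2 * u) s :=
      is_const_of_deriv_eq_zero (fun u => (hg u).differentiableAt)
        (fun u => (hg u).deriv) t s
    simp only at hconst
    linarith
  have main : ∀ s t : ℝ, dist (φ s) (φ t) = c * |s - t| := by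
    intro s t
    rcases eq_or_lt_of_le hc0 with hc | hc
    · -- c = 0 : φ constant
      have hz : ‖φ t - φ s‖ ≤ 0 := by
        have := hφlip s t
        rw [← hc] at this
        simpa using this
      have : φ t = φ s := by
        rw [← sub_eq_zero]
        exact norm_le_zero_iff.mp hz
      rw [dist_eq_norm, this, ← hc]
      simp
    · have h1 : c ^ 2 * |t - s| ≤ c * ‖φ t - φ s‖ := by
        calc c ^ 2 * |t - s| = |c ^ 2 * (t - s)| := by
              rw [abs_mul, abs_of_nonneg (sq_nonneg c)]
          _ = ‖F (φ t) - F (φ s)‖ := by rw [key s t]; rfl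
          _ ≤ c * ‖φ t - φ s‖ := hFlip (φ s) (φ t)
      have h2 : ‖φ t - φ s‖ ≤ c * |t - s| := by
        simpa [Real.norm_eq_abs] using hφlip s t
      have h3 : c * |t - s| ≤ ‖φ t - φ s‖ := by
        have := h1
        nlinarith
      have h4 : ‖φ t - φ s‖ = c * |t - s| := le_antisymm h2 h3
      have h5 : dist (φ s) (φ t) = ‖φ t - φ s‖ := by
        rw [dist_eq_norm, norm_sub_rev]
      rw [h5, h4, abs_sub_comm]
  exact ⟨main, fun hc s t => by rw [main s t, hc, one_mul]⟩
end

section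
/- Fix (p, q) ∈ ℝ² with (p, q) ≠ (0, 0), and on the upper half-plane { (τ₁, τ₂) ∈ ℝ² : τ₂ > 0 } define the (p,q)-string tension T(τ₁, τ₂) = sqrt((p + τ₁ q)² + (τ₂ q)²) / sqrt(τ₂). Then the squared norm of the gradient of log T with respect to the Poincaré metric ds² = (dτ₁² + dτ₂²)/τ₂² is constant: for all τ₁ ∈ ℝ and τ₂ > 0, τ₂² · ( (∂_{τ₁} log T)² + (∂_{τ₂} log T)² ) = 1/4. (Note T is well-defined and positive since (p + τ₁ q)² + (τ₂ q)² > 0 whenever τ₂ > 0 and (p,q) ≠ (0,0).) -/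
/-- The (p,q)-string tension `T τ₁ τ₂ = √((p + τ₁ q)² + (τ₂ q)²) / √τ₂` on the upper
half-plane has `log T` of constant squared gradient norm `1/4` with respect to the
Poincaré metric `ds² = (dτ₁² + dτ₂²)/τ₂²`. -/
theorem pq_string_alpha_constant_length
    (p q : ℝ) (hpq : (p, q) ≠ (0, 0)) (τ₁ τ₂ : ℝ) (hτ₂ : 0 < τ₂) :
    τ₂ ^ 2 *
      ((deriv (fun x : ℝ =>
          Real.log (Real.sqrt ((p + x * q) ^ 2 + (τ₂ * q) ^ 2) / Real.sqrt τ₂)) τ₁) ^ 2 +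
       (deriv (fun y : ℝ =>
          Real.log (Real.sqrt ((p + τ₁ * q) ^ 2 + (y * q) ^ 2) / Real.sqrt y)) τ₂) ^ 2) =
      1 / 4 := by
  have hq0 : q = 0 → p ≠ 0 := by
    intro h
    intro hp
    exact hpq (by simp [h, hp])
  have hA1 : ∀ x : ℝ, 0 < (p + x * q) ^ 2 + (τ₂ * q) ^ 2 := by
    intro x
    rcases eq_or_ne q 0 with h | h
    · have := hq0 h
      simp [h]
      positivity
    · have : 0 < (τ₂ * q) ^ 2 := by positivity
      nlinarith [sq_nonneg (p + x * q)]
  have hA2 : ∀ y : ℝ, y ≠ 0 → 0 < (p + τ₁ * q) ^ 2 + (y * q) ^ 2 := by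
    intro y hy
    rcases eq_or_ne q 0 with h | h
    · have := hq0 h
      simp [h]
      positivity
    · have hu : p + τ₁ * q = p + τ₁ * q := rfl
      rcases eq_or_ne (p + τ₁ * q) 0 with h2 | h2
      · have : 0 < (y * q) ^ 2 := by positivity
        nlinarith
      · have : 0 < (p + τ₁ * q) ^ 2 := by positivity
        nlinarith [sq_nonneg (y * q)]
  set A : ℝ := (p + τ₁ * q) ^ 2 + (τ₂ * q) ^ 2 with hA
  have hApos : 0 < A := hA1 τ₁
  -- first derivative
  have hD1 : deriv (fun x : ℝ =>
      Real.log (Real.sqrt ((p + x * q) ^ 2 + (τ₂ * q) ^ 2) / Real.sqrt τ₂)) τ₁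
      = (2 * (p + τ₁ * q) * q / A) / 2 := by
    have hfun : (fun x : ℝ =>
        Real.log (Real.sqrt ((p + x * q) ^ 2 + (τ₂ * q) ^ 2) / Real.sqrt τ₂))
        = fun x : ℝ => Real.log ((p + x * q) ^ 2 + (τ₂ * q) ^ 2) / 2 - Real.log τ₂ / 2 := by
      funext x
      rw [Real.log_div (Real.sqrt_ne_zero'.mpr (hA1 x)) (Real.sqrt_ne_zero'.mpr hτ₂),
        Real.log_sqrt (hA1 x).le, Real.log_sqrt hτ₂.le]
    rw [hfun]
    have hinner : HasDerivAt (fun x : ℝ => (p + x * q) ^ 2 + (τ₂ * q) ^ 2)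
        (2 * (p + τ₁ * q) * q) τ₁ := by
      have h1 : HasDerivAt (fun x : ℝ => p + x * q) q τ₁ := by
        simpa using ((hasDerivAt_id τ₁).mul_const q).const_add p
      have := (h1.fun_pow 2).add_const ((τ₂ * q) ^ 2)
      exact this.congr_deriv (by norm_num)
    have := ((hinner.log hApos.ne').div_const 2).sub_const (Real.log τ₂ / 2)
    simpa using this.deriv
  have hD2 : deriv (fun y : ℝ =>
      Real.log (Real.sqrt ((p + τ₁ * q) ^ 2 + (y * q) ^ 2) / Real.sqrt y)) τ₂
      = (2 * (τ₂ * q) * q / A) / 2 - (1 / τ₂) / 2 := by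
    have hev : (fun y : ℝ =>
        Real.log (Real.sqrt ((p + τ₁ * q) ^ 2 + (y * q) ^ 2) / Real.sqrt y))
        =ᶠ[nhds τ₂] fun y : ℝ => Real.log ((p + τ₁ * q) ^ 2 + (y * q) ^ 2) / 2 - Real.log y / 2 := by
      filter_upwards [eventually_gt_nhds hτ₂] with y hy
      rw [Real.log_div (Real.sqrt_ne_zero'.mpr (hA2 y hy.ne')) (Real.sqrt_ne_zero'.mpr hy),
        Real.log_sqrt (hA2 y hy.ne').le, Real.log_sqrt hy.le]
    rw [hev.deriv_eq]
    have hinner : HasDerivAt (fun y : ℝ => (p + τ₁ * q) ^ 2 + (y * q) ^ 2)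
        (2 * (τ₂ * q) * q) τ₂ := by
      have h1 : HasDerivAt (fun y : ℝ => y * q) q τ₂ := by
        simpa using (hasDerivAt_id τ₂).mul_const q
      have := ((h1.fun_pow 2).const_add ((p + τ₁ * q) ^ 2))
      exact this.congr_deriv (by norm_num)
    have := ((hinner.log hApos.ne').div_const 2).fun_sub ((Real.hasDerivAt_log hτ₂.ne').div_const 2)
    simpa [one_div] using this.deriv
  rw [hD1, hD2]
  have hτ : τ₂ ≠ 0 := hτ₂.ne'
  have hAne : A ≠ 0 := hApos.ne'
  field_simp
  rw [hA]
  ring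
end

section
/- Fix γ ∈ ℝ and (p, q) ∈ ℝ² with (p, q) ≠ (0, 0), and on ℝ × { (τ₁, τ₂) ∈ ℝ² : τ₂ > 0 } (the moduli space of M-theory on T², with volume modulus U and torus shape τ) define F(U, τ₁, τ₂) = γ·U + log( sqrt((p + τ₁ q)² + (τ₂ q)²) / sqrt(τ₂) ). Then the squared gradient norm of F with respect to the product metric dU² + (dτ₁² + dτ₂²)/τ₂² is constant: for all U ∈ ℝ, τ₁ ∈ ℝ, τ₂ > 0, (∂_U F)² + τ₂²·( (∂_{τ₁} F)² + (∂_{τ₂} F)² ) = γ² + 1/4. -/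
/-- On the moduli space of M-theory on `T²`, `ℝ × {τ₂ > 0}` with product metric
`dU² + (dτ₁² + dτ₂²)/τ₂²`, the log-tension
`F U τ₁ τ₂ = γ U + log (√((p + τ₁ q)² + (τ₂ q)²)/√τ₂)` has constant squared gradient
norm `γ² + 1/4`. -/
theorem mtheory_T2_alpha_constant_length
    (γ p q : ℝ) (hpq : (p, q) ≠ (0, 0)) (U τ₁ τ₂ : ℝ) (hτ₂ : 0 < τ₂) :
    (deriv (fun u : ℝ =>
        γ * u + Real.log (Real.sqrt ((p + τ₁ * q) ^ 2 + (τ₂ * q) ^ 2) / Real.sqrt τ₂)) U) ^ 2 +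
    τ₂ ^ 2 *
      ((deriv (fun x : ℝ =>
          γ * U + Real.log (Real.sqrt ((p + x * q) ^ 2 + (τ₂ * q) ^ 2) / Real.sqrt τ₂)) τ₁) ^ 2 +
       (deriv (fun y : ℝ =>
          γ * U + Real.log (Real.sqrt ((p + τ₁ * q) ^ 2 + (y * q) ^ 2) / Real.sqrt y)) τ₂) ^ 2) =
      γ ^ 2 + 1 / 4 := by
  have hq0 : q = 0 → p ≠ 0 := by
    intro h hp
    exact hpq (by simp [h, hp])
  -- positivity of the numerator (p + x q)² + (y q)² for y > 0
  have hpos : ∀ x y : ℝ, 0 < y → 0 < (p + x * q) ^ 2 + (y * q) ^ 2 := by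
    intro x y hy
    rcases eq_or_ne q 0 with h | h
    · have hp := hq0 h
      have : (0:ℝ) < p ^ 2 := by positivity
      simp only [h, mul_zero]
      nlinarith [sq_nonneg (p + x * 0)]
    · have hyq : y * q ≠ 0 := mul_ne_zero hy.ne' h
      nlinarith [sq_nonneg (p + x * q), sq_pos_of_ne_zero hyq]
  have hA : 0 < (p + τ₁ * q) ^ 2 + (τ₂ * q) ^ 2 := hpos τ₁ τ₂ hτ₂
  -- First derivative: in U
  have h1 : deriv (fun u : ℝ =>
      γ * u + Real.log (Real.sqrt ((p + τ₁ * q) ^ 2 + (τ₂ * q) ^ 2) / Real.sqrt τ₂)) U = γ := by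
    have : HasDerivAt (fun u : ℝ =>
        γ * u + Real.log (Real.sqrt ((p + τ₁ * q) ^ 2 + (τ₂ * q) ^ 2) / Real.sqrt τ₂)) γ U := by
      simpa using ((hasDerivAt_id U).const_mul γ).add_const
        (Real.log (Real.sqrt ((p + τ₁ * q) ^ 2 + (τ₂ * q) ^ 2) / Real.sqrt τ₂))
    exact this.deriv
  -- rewrite log(√B/√c) = (1/2) log B - (1/2) log c for B, c > 0
  have hlog : ∀ B c : ℝ, 0 < B → 0 < c →
      Real.log (Real.sqrt B / Real.sqrt c) = (1/2) * Real.log B - (1/2) * Real.log c := by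
    intro B c hB hc
    rw [Real.log_div (Real.sqrt_pos.mpr hB).ne' (Real.sqrt_pos.mpr hc).ne',
      Real.log_sqrt hB.le, Real.log_sqrt hc.le]
    ring
  -- Second derivative: in τ₁
  have h2 : deriv (fun x : ℝ =>
      γ * U + Real.log (Real.sqrt ((p + x * q) ^ 2 + (τ₂ * q) ^ 2) / Real.sqrt τ₂)) τ₁
      = (1/2) * (2 * (p + τ₁ * q) ^ 1 * q / ((p + τ₁ * q) ^ 2 + (τ₂ * q) ^ 2)) := by
    have heq : (fun x : ℝ =>
        γ * U + Real.log (Real.sqrt ((p + x * q) ^ 2 + (τ₂ * q) ^ 2) / Real.sqrt τ₂))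
        = fun x : ℝ => γ * U + ((1/2) * Real.log ((p + x * q) ^ 2 + (τ₂ * q) ^ 2)
            - (1/2) * Real.log τ₂) := by
      funext x
      rw [hlog _ _ (hpos x τ₂ hτ₂) hτ₂]
    rw [heq]
    have hg : HasDerivAt (fun x : ℝ => (p + x * q) ^ 2 + (τ₂ * q) ^ 2)
        (2 * (p + τ₁ * q) ^ 1 * q) τ₁ := by
      have hb : HasDerivAt (fun x : ℝ => p + x * q) q τ₁ := by
        simpa using ((hasDerivAt_id τ₁).mul_const q).const_add p
      simpa using (hb.pow 2).add_const ((τ₂ * q) ^ 2)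
    exact ((((hg.log hA.ne').const_mul (1/2)).sub_const
      ((1/2) * Real.log τ₂)).const_add (γ * U)).deriv
  -- Third derivative: in τ₂
  have h3 : deriv (fun y : ℝ =>
      γ * U + Real.log (Real.sqrt ((p + τ₁ * q) ^ 2 + (y * q) ^ 2) / Real.sqrt y)) τ₂
      = (1/2) * (2 * (τ₂ * q) ^ 1 * q / ((p + τ₁ * q) ^ 2 + (τ₂ * q) ^ 2))
        - (1/2) * τ₂⁻¹ := by
    have hev : (fun y : ℝ =>
        γ * U + Real.log (Real.sqrt ((p + τ₁ * q) ^ 2 + (y * q) ^ 2) / Real.sqrt y))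
        =ᶠ[nhds τ₂] fun y : ℝ => γ * U + ((1/2) * Real.log ((p + τ₁ * q) ^ 2 + (y * q) ^ 2)
            - (1/2) * Real.log y) := by
      filter_upwards [eventually_gt_nhds hτ₂] with y hy
      rw [hlog _ _ (hpos τ₁ y hy) hy]
    rw [hev.deriv_eq]
    have hg : HasDerivAt (fun y : ℝ => (p + τ₁ * q) ^ 2 + (y * q) ^ 2)
        (2 * (τ₂ * q) ^ 1 * q) τ₂ := by
      have hb : HasDerivAt (fun y : ℝ => y * q) q τ₂ := by
        simpa using (hasDerivAt_id τ₂).mul_const q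
      simpa using ((hb.pow 2).const_add ((p + τ₁ * q) ^ 2))
    have hL : HasDerivAt (fun y : ℝ => (1/2) * Real.log ((p + τ₁ * q) ^ 2 + (y * q) ^ 2)
        - (1/2) * Real.log y)
        ((1/2) * (2 * (τ₂ * q) ^ 1 * q / ((p + τ₁ * q) ^ 2 + (τ₂ * q) ^ 2))
          - (1/2) * τ₂⁻¹) τ₂ :=
      ((hg.log hA.ne').const_mul (1/2)).sub
        ((Real.hasDerivAt_log hτ₂.ne').const_mul (1/2))
    exact (hL.const_add (γ * U)).deriv
  rw [h1, h2, h3]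
  have hAne : ((p + τ₁ * q) ^ 2 + (τ₂ * q) ^ 2) ≠ 0 := hA.ne'
  have hAne' : (p + τ₁ * q) ^ 2 + τ₂ ^ 2 * q ^ 2 ≠ 0 := by rw [← mul_pow]; exact hAne
  field_simp
  ring
end

section
/- Let E be a complete real inner product space and let F : E → ℝ be differentiable with everywhere-differentiable gradient such that ‖∇F(x)‖ = 1 for all x ∈ E. Then the gradient vector field is constant along each of its own flow lines: if φ : ℝ → E satisfies φ'(t) = ∇F(φ(t)) for all t, then ∇F(φ(t)) = ∇F(φ(0)) for all t ∈ ℝ. -/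
open InnerProductSpace

lemma fderiv_gradient_self_eq_zero
    {E : Type*} [NormedAddCommGroup E] [InnerProductSpace ℝ E] [CompleteSpace E]
    (F : E → ℝ) (hF : Differentiable ℝ F)
    (hgrad : Differentiable ℝ (gradient F))
    (hlen : ∀ x : E, ‖gradient F x‖ = 1) (x : E) :
    fderiv ℝ (gradient F) x (gradient F x) = 0 := by
  set G := gradient F with hG
  -- first: inner ℝ (fderiv G x v) (G x) = 0 for all v
  have hsq : (fun y => (inner ℝ (G y) (G y) : ℝ)) = fun _ => (1 : ℝ) := by
    funext y
    rw [real_inner_self_eq_norm_sq, hlen y]; norm_num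
  have hderivsq : ∀ v : E,
      inner ℝ (fderiv ℝ G x v) (G x) + inner ℝ (G x) (fderiv ℝ G x v) = (0 : ℝ) := by
    intro v
    have h1 : HasFDerivAt (fun y => (inner ℝ (G y) (G y) : ℝ))
        ((innerSL ℝ (G x)).comp (fderiv ℝ G x)
          + (innerSL ℝ (G x)).comp (fderiv ℝ G x)) x := by
      have := ((hgrad x).hasFDerivAt).inner ℝ ((hgrad x).hasFDerivAt)
      refine this.congr_fderiv ?_
      ext v
      simp [real_inner_comm]
    have h2 : HasFDerivAt (fun y => (inner ℝ (G y) (G y) : ℝ)) (0 : E →L[ℝ] ℝ) x := by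
      rw [hsq]; exact hasFDerivAt_const 1 x
    have := h1.unique h2
    have := congrArg (fun L : E →L[ℝ] ℝ => L v) this
    simpa [real_inner_comm] using this
  have hperp : ∀ v : E, inner ℝ (fderiv ℝ G x v) (G x) = (0 : ℝ) := by
    intro v
    have h := hderivsq v
    have h2 := real_inner_comm (G x) ((fderiv ℝ G x) v)
    linarith
  -- symmetry of the second derivative
  have hFf' : ∀ y : E, HasFDerivAt F (toDual ℝ E (G y)) y := by
    intro y
    have : HasGradientAt F (G y) y := (hF y).hasGradientAt
    rw [hasGradientAt_iff_hasFDerivAt] at this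
    exact this
  have hF'' : HasFDerivAt (fun y => toDual ℝ E (G y))
      ((innerSL ℝ : E →L[ℝ] E →L[ℝ] ℝ).comp (fderiv ℝ G x)) x :=
    ((innerSL ℝ : E →L[ℝ] E →L[ℝ] ℝ).hasFDerivAt).comp x (hgrad x).hasFDerivAt
  have hsymm : ∀ v w : E,
      inner ℝ (fderiv ℝ G x v) w = (inner ℝ (fderiv ℝ G x w) v : ℝ) := by
    intro v w
    have := second_derivative_symmetric hFf' hF'' v w
    simpa [real_inner_comm] using this
  -- conclude
  have : ∀ w : E, inner ℝ (fderiv ℝ G x (G x)) w = (0 : ℝ) := by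
    intro w
    rw [hsymm (G x) w]
    exact hperp w
  exact ext_inner_right ℝ (fun w => by rw [this w]; simp)

/-- If `‖∇F x‖ = 1` everywhere, then the gradient vector field is constant along each of
its own flow lines: if `φ' t = ∇F (φ t)` for all `t`, then `∇F (φ t) = ∇F (φ 0)`. -/
theorem gradient_constant_along_flow
    {E : Type*} [NormedAddCommGroup E] [InnerProductSpace ℝ E] [CompleteSpace E]
    (F : E → ℝ) (hF : Differentiable ℝ F)
    (hgrad : Differentiable ℝ (gradient F))
    (hlen : ∀ x : E, ‖gradient F x‖ = 1)
    (φ : ℝ → E) (hφ : ∀ t : ℝ, HasDerivAt φ (gradient F (φ t)) t) :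
    ∀ t : ℝ, gradient F (φ t) = gradient F (φ 0) := by
  intro t
  have hg : ∀ s : ℝ, HasDerivAt (fun u => gradient F (φ u)) 0 s := by
    intro s
    have := ((hgrad (φ s)).hasFDerivAt).comp_hasDerivAt s (hφ s)
    rwa [fderiv_gradient_self_eq_zero F hF hgrad hlen (φ s)] at this
  have : ∀ a b : ℝ, gradient F (φ a) = gradient F (φ b) := by
    intro a b
    exact is_const_of_deriv_eq_zero (fun u => (hg u).differentiableAt)
      (fun u => (hg u).deriv) a b
  exact this t 0
end
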